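/- Let U be a (2n+2)-dimensional vector space over a field k of characteristic not 2 with basis e₁,...,e_{n+1}, f_{n+1},...,f₁ satisfying ⟨e_i,f_j⟩ = δ_{ij} and ⟨e_i,e_j⟩ = ⟨f_i,f_j⟩ = 0. Let T be a self-adjoint operator with separable characteristic polynomial such that ⟨e_i, T e_j⟩ = 0 whenever i + j ≤ 2n+1 and i ≤ j in the pattern of equation (distinguished shape), i.e., T e_i ∈ Span{e₁,...,e_{n+1}} for i = 1,...,n. Then Span{e₁,...,e_n, T e₁,...,T e_n} = Span{e₁,...,e_{n+1}}, an isotropic (n+1)-plane. -/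

import Mathlib

/-!
The span in question lies between the `n`-dimensional `X = Span{e₁,…,e_n}` and the
`(n+1)`-dimensional `Span{e₁,…,e_{n+1}}`, so it equals one of them. If it were `X`, then `X`
would be a nonzero `T`-stable totally isotropic subspace, which cannot exist: a separable
characteristic polynomial makes `T` semisimple, so `X` has a `T`-stable complement `W`; the
characteristic polynomials of `T` on `X` and on `W` multiply to that of `T`, hence are coprime,
and for self-adjoint `T` the kernels of coprime polynomials in `T` are orthogonal. So `X` is
orthogonal to `X ⊕ W`, i.e. to everything.
-/

open Polynomial

section

variable {K V : Type*} [Field K] [AddCommGroup V] [Module K V]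

theorem Module.End.charpoly_eq_mul_of_isCompl [FiniteDimensional K V] (f : End K V)
    {p q : Submodule K V} (hp : p ∈ f.invtSubmodule) (hq : q ∈ f.invtSubmodule)
    (hpq : IsCompl p q) :
    f.charpoly = (f.restrict hp).charpoly * (f.restrict hq).charpoly := by
  let e := Submodule.prodEquivOfIsCompl p q hpq
  have hconj : (f.restrict hp).prodMap (f.restrict hq) = e.symm.conj f := by
    apply ((Module.Free.chooseBasis K p).prod (Module.Free.chooseBasis K q)).ext
    simp only [Basis.prod_apply, LinearMap.coe_inl, LinearMap.coe_inr, LinearMap.prodMap_apply,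
      LinearEquiv.conj_apply, LinearEquiv.symm_symm, LinearMap.coe_comp, LinearEquiv.coe_coe,
      Function.comp_apply, LinearEquiv.eq_symm_apply, Sum.forall, Sum.elim_inl, Sum.elim_inr,
      Submodule.coe_prodEquivOfIsCompl', map_zero, ZeroMemClass.coe_zero, add_zero, zero_add, e]
    exact ⟨fun _ ↦ rfl, fun _ ↦ rfl⟩
  rw [← LinearMap.charpoly_prodMap, hconj, LinearEquiv.charpoly_conj]

theorem Module.End.aeval_restrict_apply_coe (f : End K V) {p : Submodule K V}
    (hp : p ∈ f.invtSubmodule) (g : K[X]) (x : p) :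
    (aeval (f.restrict hp) g x : V) = aeval f g x := by
  induction g using Polynomial.induction_on' with
  | add a b ha hb => simp [ha, hb]
  | monomial m a => simp [Module.End.pow_restrict m hp]

theorem Module.End.aeval_charpoly_restrict_apply (f : End K V) {p : Submodule K V}
    (hp : p ∈ f.invtSubmodule) [FiniteDimensional K p] {x : V} (hx : x ∈ p) :
    aeval f (f.restrict hp).charpoly x = 0 := by
  rw [← f.aeval_restrict_apply_coe hp _ ⟨x, hx⟩, LinearMap.aeval_self_charpoly]
  rfl

variable {B : LinearMap.BilinForm K V} {T : Module.End K V}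

theorem LinearMap.IsSelfAdjoint.pow (hT : B.IsSelfAdjoint T) (m : ℕ) :
    B.IsSelfAdjoint ⇑(T ^ m) := by
  induction m with
  | zero => exact isAdjointPair_one
  | succ m ih =>
    have := ih.mul hT
    rwa [← pow_succ, ← pow_succ'] at this

theorem LinearMap.IsSelfAdjoint.aeval (hT : B.IsSelfAdjoint T) (g : K[X]) :
    B.IsSelfAdjoint ⇑(aeval T g) := by
  induction g using Polynomial.induction_on' with
  | add a b ha hb => rw [map_add]; exact ha.add hb
  | monomial m a =>
    rw [aeval_monomial, Algebra.algebraMap_eq_smul_one, smul_mul_assoc, one_mul,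
      LinearMap.coe_smul]
    exact (hT.pow m).smul a

theorem LinearMap.IsSelfAdjoint.apply_eq_zero_of_isCoprime (hT : B.IsSelfAdjoint T)
    {p q : K[X]} (hpq : IsCoprime p q) {x y : V} (hx : Polynomial.aeval T p x = 0)
    (hy : Polynomial.aeval T q y = 0) : B x y = 0 := by
  obtain ⟨a, b, hab⟩ := hpq
  have hsplit : y = Polynomial.aeval T (a * p) y + Polynomial.aeval T (b * q) y := by
    rw [← LinearMap.add_apply, ← map_add, hab, map_one, Module.End.one_apply]
  rw [hsplit, map_add, ← hT.aeval, map_mul, Module.End.mul_apply, hx, map_zero, map_mul,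
    Module.End.mul_apply, hy, map_zero, map_zero, LinearMap.zero_apply, zero_add, map_zero]

theorem LinearMap.BilinForm.eq_bot_of_le_orthogonal_of_mem_invtSubmodule [FiniteDimensional K V]
    (hB : B.SeparatingLeft) (hT : B.IsSelfAdjoint T) (hsep : T.charpoly.Separable)
    {X : Submodule K V} (hX : X ∈ T.invtSubmodule) (hiso : X ≤ B.orthogonal X) : X = ⊥ := by
  obtain ⟨W, hW, hXW⟩ := Module.End.isSemisimple_iff.mp
    (Module.End.isSemisimple_of_squarefree_aeval_eq_zero hsep.squarefree
      T.aeval_self_charpoly) X hX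
  have hcop : IsCoprime (T.restrict hX).charpoly (T.restrict hW).charpoly :=
    (T.charpoly_eq_mul_of_isCompl hX hW hXW ▸ hsep).isCoprime
  refine (Submodule.eq_bot_iff X).mpr fun x hx ↦ hB x fun u ↦ ?_
  have hu : u ∈ X ⊔ W := hXW.sup_eq_top ▸ Submodule.mem_top
  obtain ⟨y, hy, w, hw, rfl⟩ := Submodule.mem_sup.mp hu
  rw [map_add, hiso hy x hx, hT.apply_eq_zero_of_isCoprime hcop
    (T.aeval_charpoly_restrict_apply hX hx) (T.aeval_charpoly_restrict_apply hW hw), add_zero]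

theorem LinearMap.BilinForm.span_range_le_orthogonal {ι : Type*} {v : ι → V}
    (hv : ∀ i j, B (v i) (v j) = 0) :
    Submodule.span K (Set.range v) ≤ B.orthogonal (Submodule.span K (Set.range v)) := by
  refine Submodule.span_le.mpr (Set.range_subset_iff.mpr fun j x hx ↦ ?_)
  have hker : Submodule.span K (Set.range v) ≤ LinearMap.ker (B.flip (v j)) :=
    Submodule.span_le.mpr (Set.range_subset_iff.mpr fun i ↦ hv i j)
  exact hker hx

theorem Submodule.eq_or_eq_of_finrank_eq_add_one [FiniteDimensional K V]
    {p q r : Submodule K V} (hpq : p ≤ q) (hqr : q ≤ r)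
    (h : Module.finrank K r = Module.finrank K p + 1) : q = p ∨ q = r := by
  by_contra! hne
  have hpq' := Submodule.finrank_lt_finrank_of_lt (hpq.lt_of_ne hne.1.symm)
  have hqr' := Submodule.finrank_lt_finrank_of_lt (hqr.lt_of_ne hne.2)
  omega

end

theorem linearIndependent_of_biorthogonal {R M N ι : Type*} [CommRing R] [AddCommGroup M]
    [Module R M] [AddCommGroup N] [Module R N] [Fintype ι] [DecidableEq ι]
    (B : M →ₗ[R] N →ₗ[R] R) {e : ι → M} {f : ι → N}
    (h : ∀ i j, B (e i) (f j) = if i = j then 1 else 0) : LinearIndependent R e := by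
  refine Fintype.linearIndependent_iff.mpr fun c hc j ↦ ?_
  simpa [h] using congrArg (fun v ↦ B v (f j)) hc

theorem stmt8_general {k : Type*} [Field k] (n : ℕ) (hn : 1 ≤ n)
    {U : Type*} [AddCommGroup U] [Module k U] [FiniteDimensional k U]
    (B : LinearMap.BilinForm k U)
    (hnd : LinearMap.BilinForm.Nondegenerate B)
    (e f : Fin (n + 1) → U)
    (hef : ∀ i j, B (e i) (f j) = if i = j then 1 else 0)
    (hee : ∀ i j, B (e i) (e j) = 0)
    (T : Module.End k U) (hT : ∀ v w : U, B (T v) w = B v (T w))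
    (hsep : (LinearMap.charpoly T).Separable)
    (hTe : ∀ i : Fin n, T (e i.castSucc) ∈ Submodule.span k (Set.range e)) :
    Submodule.span k
        (Set.range (fun i : Fin n => e i.castSucc) ∪
          Set.range (fun i : Fin n => T (e i.castSucc)))
      = Submodule.span k (Set.range e) := by
  set X := Submodule.span k (Set.range fun i : Fin n ↦ e i.castSucc)
  set W := Submodule.span k
    (Set.range (fun i : Fin n ↦ e i.castSucc) ∪ Set.range (fun i : Fin n ↦ T (e i.castSucc)))
  have he : LinearIndependent k e := linearIndependent_of_biorthogonal B hef
  have hXW : X ≤ W := Submodule.span_mono Set.subset_union_left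
  have hWE : W ≤ Submodule.span k (Set.range e) := Submodule.span_le.mpr <| Set.union_subset
    (Set.range_subset_iff.mpr fun i ↦ Submodule.subset_span ⟨i.castSucc, rfl⟩)
    (Set.range_subset_iff.mpr hTe)
  have heX : LinearIndependent k fun i : Fin n ↦ e i.castSucc :=
    he.comp _ (Fin.castSucc_injective n)
  have hrank : Module.finrank k (Submodule.span k (Set.range e)) = Module.finrank k X + 1 := by
    rw [finrank_span_eq_card he, finrank_span_eq_card heX, Fintype.card_fin, Fintype.card_fin]
  refine (Submodule.eq_or_eq_of_finrank_eq_add_one hXW hWE hrank).resolve_left fun hWX ↦ ?_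
  have hX : X ∈ T.invtSubmodule := Submodule.span_le.mpr <| Set.range_subset_iff.mpr
    fun i ↦ hWX ▸ Submodule.subset_span (Or.inr ⟨i, rfl⟩)
  have hXbot : X = ⊥ := B.eq_bot_of_le_orthogonal_of_mem_invtSubmodule hnd.1 hT hsep hX
    (B.span_range_le_orthogonal fun i j ↦ hee _ _)
  have he0 : e (Fin.castSucc ⟨0, hn⟩) ∈ X := Submodule.subset_span ⟨⟨0, hn⟩, rfl⟩
  exact he.ne_zero _ ((Submodule.mem_bot k).mp (hXbot ▸ he0))

/-- In the split quadratic space of dimension `2n+2` with standard hyperbolic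
basis `e₁,...,e_{n+1}, f_{n+1},...,f₁`, if the self-adjoint operator `T` with
separable characteristic polynomial maps each of `e₁,...,e_n` into
`Span{e₁,...,e_{n+1}}`, then `Span{e₁,...,e_n, Te₁,...,Te_n}` equals the
isotropic `(n+1)`-plane `Span{e₁,...,e_{n+1}}`. -/
theorem stmt8 {k : Type*} [Field k] (hchar : (2 : k) ≠ 0) (n : ℕ) (hn : 1 ≤ n)
    {U : Type*} [AddCommGroup U] [Module k U] [FiniteDimensional k U]
    (B : LinearMap.BilinForm k U) (hsymm : LinearMap.BilinForm.IsSymm B)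
    (hnd : LinearMap.BilinForm.Nondegenerate B)
    (e f : Fin (n + 1) → U)
    (hef : ∀ i j, B (e i) (f j) = if i = j then 1 else 0)
    (hee : ∀ i j, B (e i) (e j) = 0)
    (hff : ∀ i j, B (f i) (f j) = 0)
    (hspan : Submodule.span k (Set.range e ∪ Set.range f) = ⊤)
    (T : Module.End k U) (hT : ∀ v w : U, B (T v) w = B v (T w))
    (hsep : (LinearMap.charpoly T).Separable)
    (hTe : ∀ i : Fin n, T (e i.castSucc) ∈ Submodule.span k (Set.range e)) :
    Submodule.span k
        (Set.range (fun i : Fin n => e i.castSucc) ∪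
          Set.range (fun i : Fin n => T (e i.castSucc)))
      = Submodule.span k (Set.range e) :=
  stmt8_general n hn B hnd e f hef hee T hT hsep hTe
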